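/- Let Λ and Ω be distinct superpartitions of the same degree (n|m) that are comparable in the dominance order. Then the pairs of eigenvalue polynomials differ: either α·n((Λ*)') - n(Λ*) ≠ α·n((Ω*)') - n(Ω*) as polynomials in α, or α·|Λ^a| - |(Λ')^a| ≠ α·|Ω^a| - |(Ω')^a| as polynomials in α. -/

import Mathlib

/-- A function `ℕ → ℕ` represents a partition: non-increasing and eventually zero. -/
def IsPartitionFn (f : ℕ → ℕ) : Prop :=
  (∀ ⦃i j : ℕ⦄, i ≤ j → f j ≤ f i) ∧ ∃ N, ∀ i, N ≤ i → f i = 0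

/-- A superpartition of fermionic degree `m`: a strictly decreasing sequence `a` of
`m` nonnegative integers together with an ordinary partition `s` (a non-increasing
list of positive integers). -/
structure SuperPartition (m : ℕ) where
  a : Fin m → ℕ
  a_strictAnti : ∀ ⦃i j : Fin m⦄, i < j → a j < a i
  s : List ℕ
  s_sorted : s.Pairwise (· ≥ ·)
  s_pos : ∀ x ∈ s, 0 < x

/-- Sort a finite multiset of naturals into the non-increasing function it defines. -/
def sortFn (ms : Multiset ℕ) : ℕ → ℕ := fun i => (ms.sort (· ≥ ·)).getD i 0

/-- `Λ* = sort(Λᵃ ∪ Λˢ)`. -/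
def SuperPartition.starFn {m : ℕ} (Λ : SuperPartition m) : ℕ → ℕ :=
  sortFn ((List.ofFn Λ.a : Multiset ℕ) + (Λ.s : Multiset ℕ))

/-- `Λ^⊛ = sort((Λᵃ + 1ᵐ) ∪ Λˢ)`. -/
def SuperPartition.circFn {m : ℕ} (Λ : SuperPartition m) : ℕ → ℕ :=
  sortFn ((List.ofFn (fun i => Λ.a i + 1) : Multiset ℕ) + (Λ.s : Multiset ℕ))

/-- The bosonic degree `|Λ|` of a superpartition. -/
def SuperPartition.deg {m : ℕ} (Λ : SuperPartition m) : ℕ :=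
  (∑ i, Λ.a i) + Λ.s.sum

/-- `f` dominates `g`: all partial sums of `f` are at least those of `g`. -/
def Dominates (f g : ℕ → ℕ) : Prop :=
  ∀ k, ∑ i ∈ Finset.range k, g i ≤ ∑ i ∈ Finset.range k, f i

/-- Dominance order on superpartitions: `Λ ≥ Ω` iff they have the same degrees and
`Λ* ≥ Ω*`, `Λ^⊛ ≥ Ω^⊛` in dominance order. -/
def SuperDom {m : ℕ} (Λ Ω : SuperPartition m) : Prop :=
  Λ.deg = Ω.deg ∧ Dominates Λ.starFn Ω.starFn ∧ Dominates Λ.circFn Ω.circFn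

/-- The conjugate (transpose) of a partition function. -/
noncomputable def conjFn (f : ℕ → ℕ) : ℕ → ℕ := fun i => Set.ncard {j : ℕ | i < f j}

/-- `n(ν) = Σ_i (i-1) ν_i` (0-indexed). -/
noncomputable def nStat (f : ℕ → ℕ) : ℕ := ∑ᶠ i, i * f i

/-- The sum of the fermionic parts of the superpartition with description
`(lam, mu) = (Λ*, Λ^⊛)`: the sum of `lam i` over the fermionic rows `i`. -/
noncomputable def fermSum (lam mu : ℕ → ℕ) : ℕ := ∑ᶠ i, (mu i - lam i) * lam i

/-!
The constant term of `ε_Λ` is `-n(Λ*)` and the coefficient of `α` in `ε̃_Λ` is `|Λᵃ|`, so it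
suffices to show that `Λ ≥ Ω`, `n(Λ*) = n(Ω*)` and `|Λᵃ| = |Ωᵃ|` force `Λ = Ω`.

For partitions of equal size supported in `[0, N)`, `n(λ) + Σ_{k ≤ N} (λ₀ + ⋯ + λ_{k-1}) = N |λ|`,
so `Λ* ≥ Ω*` together with `n(Λ*) = n(Ω*)` gives `Λ* = Ω*`. Dominance `Λ^⊛ ≥ Ω^⊛` implies
`Σᵢ (Λ^⊛ᵢ - K)₊ ≥ Σᵢ (Ω^⊛ᵢ - K)₊` for every `K`, and since `Λ^⊛` is `Λ*` with the fermionic rows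
lengthened by one, this sum exceeds `Σᵢ (Λ*ᵢ - K)₊` by the number of fermionic parts `≥ K`.
Hence `Ω` has at most as many fermionic parts `≥ K` as `Λ` for every `K`, that is `Ωᵃ ≤ Λᵃ`
entrywise, and `|Λᵃ| = |Ωᵃ|` gives `Λᵃ = Ωᵃ`. The bosonic parts are then read off `Λ* = Ω*`.
-/

open Finset

lemma Polynomial.eq_and_eq_of_X_mul_C_sub_C_eq {R : Type*} [Ring R] {a b c d : R}
    (h : X * C a - C b = X * C c - C d) : a = c ∧ b = d :=
  ⟨by simpa using congrArg (coeff · 1) h, by simpa using congrArg (coeff · 0) h⟩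

lemma List.map_range_getD_eq_append_replicate {α : Type*} (L : List α) (d : α) {N : ℕ}
    (h : L.length ≤ N) :
    (List.range N).map (fun i => L.getD i d) = L ++ List.replicate (N - L.length) d := by
  refine List.ext_getElem (by simp; omega) fun i h₁ h₂ => ?_
  simp only [List.getElem_map, List.getElem_range, List.getD_eq_getElem?_getD, List.getElem_append]
  split_ifs with hi
  · simp [hi]
  · simp [List.getElem?_eq_none (by omega : L.length ≤ i)]

lemma map_range_sortFn (ms : Multiset ℕ) {N : ℕ} (h : Multiset.card ms ≤ N) :
    (Multiset.range N).map (sortFn ms) = ms + Multiset.replicate (N - Multiset.card ms) 0 := by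
  have hL := List.map_range_getD_eq_append_replicate (ms.sort (· ≥ ·)) 0
    (N := N) (by rwa [Multiset.length_sort])
  rw [Multiset.length_sort] at hL
  rw [← Multiset.coe_range, Multiset.map_coe]
  unfold sortFn
  rw [hL, ← Multiset.coe_add, Multiset.sort_eq, Multiset.coe_replicate]

lemma sum_range_sortFn {M : Type*} [AddCommMonoid M] (g : ℕ → M) (hg : g 0 = 0) (ms : Multiset ℕ) {N : ℕ}
    (h : Multiset.card ms ≤ N) :
    ∑ i ∈ range N, g (sortFn ms i) = (ms.map g).sum := by
  rw [Finset.sum_eq_multiset_sum, range_val, ← Function.comp_def, ← Multiset.map_map,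
    map_range_sortFn ms h]
  simp [hg]

lemma count_eq_of_sortFn_eq {ms nt : Multiset ℕ} (h : sortFn ms = sortFn nt) {x : ℕ}
    (hx : x ≠ 0) : ms.count x = nt.count x := by
  have := congrArg
    (fun f => ((Multiset.range (Multiset.card ms + Multiset.card nt)).map f).count x) h
  simpa [map_range_sortFn, Multiset.count_replicate, hx.symm] using this

lemma sortFn_eq_zero (ms : Multiset ℕ) {i : ℕ} (h : Multiset.card ms ≤ i) :
    sortFn ms i = 0 :=
  List.getD_eq_default _ _ (by rwa [Multiset.length_sort])

lemma sortFn_antitone (ms : Multiset ℕ) : Antitone (sortFn ms) := by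
  intro i j hij
  unfold sortFn
  rcases lt_or_ge j (ms.sort (· ≥ ·)).length with hj | hj
  · rw [List.getD_eq_getElem _ _ hj, List.getD_eq_getElem _ _ (hij.trans_lt hj)]
    rcases hij.eq_or_lt with rfl | hlt
    · rfl
    · exact List.pairwise_iff_getElem.mp (Multiset.pairwise_sort ms (· ≥ ·)) _ _ _ _ hlt
  · rw [List.getD_eq_default _ _ hj]
    exact Nat.zero_le _

lemma nStat_eq_sum_range {f : ℕ → ℕ} {N : ℕ} (hf : ∀ i, N ≤ i → f i = 0) :
    nStat f = ∑ i ∈ range N, i * f i :=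
  finsum_eq_finsetSum_of_support_subset _ fun i hi => by
    by_contra hiN
    exact hi (by simp [hf i (by simpa using hiN)])

lemma sum_range_mul_add_sum_partialSums (f : ℕ → ℕ) (N : ℕ) :
    ∑ i ∈ range N, i * f i + ∑ k ∈ range (N + 1), ∑ i ∈ range k, f i
      = N * ∑ i ∈ range N, f i := by
  induction N with
  | zero => simp
  | succ N ih =>
    rw [sum_range_succ, sum_range_succ _ (N + 1), sum_range_succ f N]
    linarith

lemma eq_of_dominates_of_nStat_eq {f g : ℕ → ℕ} {N : ℕ} (hf : ∀ i, N ≤ i → f i = 0)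
    (hg : ∀ i, N ≤ i → g i = 0) (hsum : ∑ i ∈ range N, f i = ∑ i ∈ range N, g i)
    (hdom : Dominates f g) (hn : nStat f = nStat g) : f = g := by
  have hpartial : ∀ k ∈ range (N + 1), ∑ i ∈ range k, g i = ∑ i ∈ range k, f i := by
    refine (sum_eq_sum_iff_of_le fun k _ => hdom k).mp ?_
    have hf' := sum_range_mul_add_sum_partialSums f N
    have hg' := sum_range_mul_add_sum_partialSums g N
    rw [← nStat_eq_sum_range hf, hn, hsum] at hf'
    rw [← nStat_eq_sum_range hg] at hg'
    omega
  funext i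
  rcases lt_or_ge i N with hi | hi
  · have hsucc := hpartial (i + 1) (by simpa using hi)
    rw [sum_range_succ, sum_range_succ, hpartial i (by simp; omega)] at hsucc
    omega
  · rw [hf i hi, hg i hi]

lemma Dominates.sum_range_tsub_le {f g : ℕ → ℕ} (hdom : Dominates f g) (hg : Antitone g)
    (N K : ℕ) : ∑ i ∈ range N, (g i - K) ≤ ∑ i ∈ range N, (f i - K) := by
  have hex : ∃ c, N ≤ c ∨ g c ≤ K := ⟨N, .inl le_rfl⟩
  obtain ⟨c, hc, hc_min⟩ : ∃ c, (N ≤ c ∨ g c ≤ K) ∧ ∀ i < c, ¬(N ≤ i ∨ g i ≤ K) :=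
    ⟨Nat.find hex, Nat.find_spec hex, fun i hi => Nat.find_min hex hi⟩
  have hcN : c ≤ N := not_lt.mp fun h => hc_min N h (.inl le_rfl)
  have hhead : ∑ i ∈ range c, g i = ∑ i ∈ range c, (g i - K + K) :=
    sum_congr rfl fun i hi => by
      have := hc_min i (mem_range.mp hi)
      omega
  have htail : ∀ i ∈ Ico c N, g i - K = 0 := fun i hi => by
    rw [mem_Ico] at hi
    have := hc.resolve_left (by omega)
    have := hg hi.1
    omega
  have hsplit : ∀ h : ℕ → ℕ,
      ∑ i ∈ range c, (h i - K + K) = ∑ i ∈ range c, (h i - K) + c * K := fun h => by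
    rw [sum_add_distrib, sum_const, card_range, smul_eq_mul]
  calc ∑ i ∈ range N, (g i - K)
      = ∑ i ∈ range c, (g i - K) := by
        rw [← sum_range_add_sum_Ico _ hcN, sum_eq_zero htail, add_zero]
    _ = ∑ i ∈ range c, g i - c * K := by
        rw [hhead, hsplit, Nat.add_sub_cancel]
    _ ≤ ∑ i ∈ range c, f i - c * K := Nat.sub_le_sub_right (hdom c) _
    _ ≤ ∑ i ∈ range c, (f i - K) := by
        rw [tsub_le_iff_right, ← hsplit]
        exact sum_le_sum fun i _ => le_tsub_add
    _ ≤ ∑ i ∈ range N, (f i - K) := sum_le_sum_of_subset (range_subset_range.mpr hcN)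

section CountGe

variable {m : ℕ} {α : Type*} [LinearOrder α]

def countGe (a : Fin m → α) (K : α) : ℕ := #{j | K ≤ a j}

lemma lt_countGe_of_le {a : Fin m → α} (ha : Antitone a) {K : α} {j : Fin m} (h : K ≤ a j) :
    (j : ℕ) < countGe a K := by
  have hsub : Iic j ⊆ ({i | K ≤ a i} : Finset (Fin m)) := fun i hi => by
    simpa using h.trans (ha (mem_Iic.mp hi))
  have := card_le_card hsub
  rw [Fin.card_Iic] at this
  exact this

lemma le_of_lt_countGe {a : Fin m → α} (ha : Antitone a) {K : α} {j : Fin m}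
    (h : (j : ℕ) < countGe a K) : K ≤ a j := by
  by_contra hlt
  have hsub : ({i | K ≤ a i} : Finset (Fin m)) ⊆ Iio j := fun i hi => by
    simp only [mem_filter, mem_univ, true_and] at hi
    exact mem_Iio.mpr (lt_of_not_ge fun hji => hlt (hi.trans (ha hji)))
  have := card_le_card hsub
  rw [Fin.card_Iio] at this
  exact absurd h (not_lt.mpr this)

lemma le_of_countGe_le {a b : Fin m → α} (ha : Antitone a) (hb : Antitone b)
    (h : ∀ K, countGe a K ≤ countGe b K) : a ≤ b := fun _ =>
  le_of_lt_countGe hb ((lt_countGe_of_le ha le_rfl).trans_le (h _))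

end CountGe

namespace SuperPartition

variable {m : ℕ} (Λ : SuperPartition m)

lemma antitone_a : Antitone Λ.a :=
  StrictAnti.antitone Λ.a_strictAnti

lemma card_star :
    Multiset.card ((List.ofFn Λ.a : Multiset ℕ) + (Λ.s : Multiset ℕ)) = m + Λ.s.length := by
  simp

lemma card_circ :
    Multiset.card ((List.ofFn (fun i => Λ.a i + 1) : Multiset ℕ) + (Λ.s : Multiset ℕ))
      = m + Λ.s.length := by
  simp

lemma starFn_eq_zero {i : ℕ} (hi : m + Λ.s.length ≤ i) : Λ.starFn i = 0 :=
  sortFn_eq_zero _ (Λ.card_star.trans_le hi)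

lemma sum_range_starFn {N : ℕ} (hN : m + Λ.s.length ≤ N) :
    ∑ i ∈ range N, Λ.starFn i = Λ.deg := by
  refine (sum_range_sortFn id rfl _ (Λ.card_star.trans_le hN)).trans ?_
  simp [deg, List.sum_ofFn]

lemma sum_range_circFn_tsub {N : ℕ} (hN : m + Λ.s.length ≤ N) (K : ℕ) :
    ∑ i ∈ range N, (Λ.circFn i - K) = ∑ i ∈ range N, (Λ.starFn i - K) + countGe Λ.a K := by
  rw [circFn, starFn, sum_range_sortFn (· - K) (zero_tsub K) _ (Λ.card_circ.trans_le hN),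
    sum_range_sortFn (· - K) (zero_tsub K) _ (Λ.card_star.trans_le hN)]
  simp only [Multiset.map_add, Multiset.sum_add, Multiset.map_coe, Multiset.sum_coe,
    List.map_ofFn, List.sum_ofFn, countGe, card_filter, Function.comp_apply]
  rw [add_right_comm, ← sum_add_distrib]
  congr 1
  exact sum_congr rfl fun j _ => by split_ifs <;> omega

variable {Λ} {Ω : SuperPartition m}

lemma ext_of_starFn_eq (ha : Λ.a = Ω.a) (hstar : Λ.starFn = Ω.starFn) : Λ = Ω := by
  have hcount : ∀ x, (Λ.s : Multiset ℕ).count x = (Ω.s : Multiset ℕ).count x := by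
    intro x
    rcases eq_or_ne x 0 with rfl | hx
    · rw [Multiset.count_eq_zero.mpr fun h => (Λ.s_pos 0 h).false,
        Multiset.count_eq_zero.mpr fun h => (Ω.s_pos 0 h).false]
    · have := count_eq_of_sortFn_eq hstar hx
      rwa [Multiset.count_add, Multiset.count_add, ha, add_right_inj] at this
  have hs : Λ.s = Ω.s :=
    (Multiset.coe_eq_coe.mp (Multiset.ext.mpr hcount)).eq_of_pairwise
      (fun _ _ _ _ h₁ h₂ => le_antisymm h₂ h₁) Λ.s_sorted Ω.s_sorted
  cases Λ
  cases Ω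
  simp_all

end SuperPartition

namespace SuperDom

variable {m : ℕ} {Λ Ω : SuperPartition m}

lemma countGe_le (h : SuperDom Λ Ω) (hstar : Λ.starFn = Ω.starFn) (K : ℕ) :
    countGe Ω.a K ≤ countGe Λ.a K := by
  have := h.2.2.sum_range_tsub_le (sortFn_antitone _) (m + Λ.s.length + Ω.s.length) K
  rw [Λ.sum_range_circFn_tsub (by omega), Ω.sum_range_circFn_tsub (by omega), hstar] at this
  omega

lemma a_eq (h : SuperDom Λ Ω) (hstar : Λ.starFn = Ω.starFn)
    (hsum : ∑ i, Λ.a i = ∑ i, Ω.a i) : Λ.a = Ω.a := by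
  have hle : Ω.a ≤ Λ.a := le_of_countGe_le Ω.antitone_a Λ.antitone_a (h.countGe_le hstar)
  funext j
  exact ((sum_eq_sum_iff_of_le fun i _ => hle i).mp hsum.symm j (mem_univ j)).symm

lemma eq_of_nStat_eq_of_sum_eq (h : SuperDom Λ Ω) (hn : nStat Λ.starFn = nStat Ω.starFn)
    (hsum : ∑ i, Λ.a i = ∑ i, Ω.a i) : Λ = Ω := by
  have hstar : Λ.starFn = Ω.starFn :=
    eq_of_dominates_of_nStat_eq (N := m + Λ.s.length + Ω.s.length)
      (fun i hi => Λ.starFn_eq_zero (by omega))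
      (fun i hi => Ω.starFn_eq_zero (by omega))
      (by rw [Λ.sum_range_starFn (by omega), Ω.sum_range_starFn (by omega), h.1]) h.2.1 hn
  exact SuperPartition.ext_of_starFn_eq (h.a_eq hstar hsum) hstar

end SuperDom

open Polynomial in
theorem stmt10_general {m : ℕ} (Λ Ω : SuperPartition m)
    (hne : Λ ≠ Ω)
    (hcomp : SuperDom Λ Ω ∨ SuperDom Ω Λ) :
    (X * C ((nStat (conjFn Λ.starFn) : ℚ)) - C ((nStat Λ.starFn : ℚ))
      ≠ X * C ((nStat (conjFn Ω.starFn) : ℚ)) - C ((nStat Ω.starFn : ℚ))) ∨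
    (X * C (((∑ i, Λ.a i : ℕ) : ℚ))
        - C ((fermSum (conjFn Λ.starFn) (conjFn Λ.circFn) : ℚ))
      ≠ X * C (((∑ i, Ω.a i : ℕ) : ℚ))
        - C ((fermSum (conjFn Ω.starFn) (conjFn Ω.circFn) : ℚ))) := by
  by_contra! ⟨hε, hε'⟩
  have hn : nStat Λ.starFn = nStat Ω.starFn := by
    exact_mod_cast (eq_and_eq_of_X_mul_C_sub_C_eq hε).2
  have hsum : ∑ i, Λ.a i = ∑ i, Ω.a i := by
    exact_mod_cast (eq_and_eq_of_X_mul_C_sub_C_eq hε').1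
  rcases hcomp with h | h
  · exact hne (h.eq_of_nStat_eq_of_sum_eq hn hsum)
  · exact hne (h.eq_of_nStat_eq_of_sum_eq hn.symm hsum.symm).symm

open Polynomial in
/-- two distinct superpartitions of the same degree that are comparable
in dominance order have distinct pairs of eigenvalue polynomials
`ε_Λ(α) = α n((Λ*)') - n(Λ*)` and `ε̃_Λ(α) = α |Λᵃ| - |(Λ')ᵃ|`. -/
theorem stmt10 {m : ℕ} (Λ Ω : SuperPartition m)
    (hdeg : Λ.deg = Ω.deg) (hne : Λ ≠ Ω)
    (hcomp : SuperDom Λ Ω ∨ SuperDom Ω Λ) :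
    (X * C ((nStat (conjFn Λ.starFn) : ℚ)) - C ((nStat Λ.starFn : ℚ))
      ≠ X * C ((nStat (conjFn Ω.starFn) : ℚ)) - C ((nStat Ω.starFn : ℚ))) ∨
    (X * C (((∑ i, Λ.a i : ℕ) : ℚ))
        - C ((fermSum (conjFn Λ.starFn) (conjFn Λ.circFn) : ℚ))
      ≠ X * C (((∑ i, Ω.a i : ℕ) : ℚ))
        - C ((fermSum (conjFn Ω.starFn) (conjFn Ω.circFn) : ℚ))) :=
  stmt10_general Λ Ω hne hcomp
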